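/- Let G be a limit group (a finitely generated fully residually free group) and let A be a nontrivial abelian subgroup of G. Then there exists a unique subgroup M of G such that M is abelian, A ≤ M, and M is maximal among abelian subgroups of G (i.e., every abelian subgroup of G containing M equals M). -/

import Mathlib

/-!
Free groups are commutative transitive: if `b ≠ 1` commutes with `a` and with `c`, then by
Nielsen–Schreier the subgroup `⟨a, b, c⟩` is free with a nontrivial central element, which forces
it to have at most one basis element, so it is cyclic and `a` commutes with `c`. A failure
`⁅a, c⁆ ≠ 1` of commutative transitivity in a fully residually free group would survive, together
with `b ≠ 1`, in some free quotient, so limit groups are commutative transitive as well. In a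
commutative transitive group the centralizer of any `a ≠ 1` is abelian, and every abelian subgroup
containing `a` lies in it; for `a ∈ A` this centralizer is the unique maximal abelian subgroup
containing `A`.
-/

def FullyResiduallyFree (G : Type*) [Group G] : Prop :=
  ∀ S : Finset G, (1 : G) ∉ S →
    ∃ h : G →* FreeGroup (Fin 2), ∀ s ∈ S, h s ≠ 1

def CommTransitive (G : Type*) [Group G] : Prop :=
  ∀ ⦃a b c : G⦄, b ≠ 1 → Commute a b → Commute b c → Commute a c

namespace IsFreeGroup

open Subgroup

variable {G : Type*} [Group G] [IsFreeGroup G]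

theorem not_commute_of_ne {a b : Generators G} (hab : a ≠ b) : ¬Commute (of a) (of b) := by
  classical
  intro h
  have := h.map (lift fun x => if x = a then Equiv.swap (0 : Fin 3) 1 else Equiv.swap 1 2)
  simp only [lift_of, if_neg hab.symm] at this
  exact absurd this.eq (by decide)

theorem isCyclic_of_subsingleton_generators [Subsingleton (Generators G)] : IsCyclic G := by
  have : IsCyclic (FreeGroup (Generators G)) := by
    cases isEmpty_or_nonempty (Generators G)
    · infer_instance
    · have : Unique (Generators G) := uniqueOfSubsingleton (Classical.arbitrary _)
      infer_instance
  exact isCyclic_of_surjective (toFreeGroup G).symm (toFreeGroup G).symm.surjective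

theorem isCyclic_of_isMulCommutative [IsMulCommutative G] : IsCyclic G :=
  have : Subsingleton (Generators G) :=
    ⟨fun _ _ => by_contra fun hab => not_commute_of_ne hab (mul_comm' _ _)⟩
  isCyclic_of_subsingleton_generators

noncomputable def exponentSum (a : Generators G) : G →* Multiplicative ℤ := by
  classical exact lift (Pi.mulSingle a (Multiplicative.ofAdd 1))

@[simp]
theorem exponentSum_of_self (a : Generators G) :
    exponentSum a (of a) = Multiplicative.ofAdd 1 := by
  simp [exponentSum]

theorem exponentSum_of_of_ne {a b : Generators G} (hab : b ≠ a) : exponentSum a (of b) = 1 := by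
  simp [exponentSum, hab]

/-- `⟨x, of a⟩` is free and abelian, hence cyclic, and `of a` generates it because its exponent
sum in `a` is `1`. -/
theorem mem_zpowers_of_commute {a : Generators G} {x : G} (h : Commute x (of a)) :
    x ∈ zpowers (of a) := by
  have : IsMulCommutative (closure {x, of a}) := isMulCommutative_closure (by
    simp only [Set.mem_insert_iff, Set.mem_singleton_iff]
    rintro _ (rfl | rfl) _ (rfl | rfl) <;> simp [h.eq])
  have := isCyclic_of_isMulCommutative (G := closure {x, of a})
  obtain ⟨z, hz⟩ := IsCyclic.exists_generator (α := closure {x, of a})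
  obtain ⟨p, hp⟩ := mem_zpowers_iff.mp (hz ⟨x, subset_closure (by simp)⟩)
  obtain ⟨q, hq⟩ := mem_zpowers_iff.mp (hz ⟨of a, subset_closure (by simp)⟩)
  have hq : (z : G) ^ q = of a := congrArg Subtype.val hq
  have hqq : q * q = 1 := by
    have h1 : q * Multiplicative.toAdd (exponentSum a z) = 1 := by
      simpa using congrArg (fun g => Multiplicative.toAdd (exponentSum a g)) hq
    rcases Int.eq_one_or_neg_one_of_mul_eq_one h1 with rfl | rfl <;> rfl
  have hp : (z : G) ^ p = x := congrArg Subtype.val hp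
  have hz : (z : G) = of a ^ q := by
    calc (z : G) = z ^ (q * q) := by rw [hqq, zpow_one]
      _ = of a ^ q := by rw [zpow_mul, hq]
  exact ⟨q * p, show of a ^ (q * p) = x by rw [zpow_mul, ← hz, hp]⟩

theorem eq_one_of_commute_of_commute {a b : Generators G} (hab : a ≠ b) {t : G}
    (ha : Commute t (of a)) (hb : Commute t (of b)) : t = 1 := by
  obtain ⟨m, rfl⟩ := mem_zpowers_iff.mp (mem_zpowers_of_commute ha)
  obtain ⟨n, hn⟩ := mem_zpowers_iff.mp (mem_zpowers_of_commute hb)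
  have hm : Multiplicative.ofAdd m = 1 := by
    simpa [exponentSum_of_of_ne hab.symm] using (congrArg (exponentSum a) hn).symm
  simp [show m = 0 from hm]

theorem isCyclic_of_commute {t : G} (ht : t ≠ 1) (h : ∀ g, Commute t g) : IsCyclic G :=
  have : Subsingleton (Generators G) :=
    ⟨fun _ _ => by_contra fun hab => ht (eq_one_of_commute_of_commute hab (h _) (h _))⟩
  isCyclic_of_subsingleton_generators

theorem commTransitive : CommTransitive G := by
  intro a b c hb hab hbc
  have hHb : closure {a, b, c} ≤ centralizer {b} := by
    simp [closure_le, Set.insert_subset_iff, mem_centralizer_singleton_iff, hab.eq, hbc.eq]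
  set H := closure {a, b, c}
  have hbH : b ∈ H := subset_closure (by simp)
  have : IsCyclic H := isCyclic_of_commute (t := ⟨b, hbH⟩) (by simpa using hb)
    fun g => Subtype.ext (mem_centralizer_singleton_iff.mp (hHb g.2)).symm
  exact congrArg Subtype.val
    (mul_comm' (⟨a, subset_closure (by simp)⟩ : H) ⟨c, subset_closure (by simp)⟩)

end IsFreeGroup

section CommTransitive

open Subgroup
open scoped commutatorElement

variable {G : Type*} [Group G]

theorem FullyResiduallyFree.commTransitive (hG : FullyResiduallyFree G) : CommTransitive G := by
  classical
  intro a b c hb hab hbc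
  by_contra hac
  have hac' : ⁅a, c⁆ ≠ 1 := mt commutatorElement_eq_one_iff_commute.mp hac
  obtain ⟨f, hf⟩ := hG {b, ⁅a, c⁆} (by simp [hb.symm, hac'.symm])
  refine hf ⁅a, c⁆ (by simp) ?_
  rw [map_commutatorElement, commutatorElement_eq_one_iff_commute]
  exact IsFreeGroup.commTransitive (hf b (by simp)) (hab.map f) (hbc.map f)

theorem CommTransitive.mul_comm_of_mem_centralizer (hG : CommTransitive G) {a x y : G}
    (ha : a ≠ 1) (hx : x ∈ centralizer {a}) (hy : y ∈ centralizer {a}) : x * y = y * x :=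
  (hG ha (mem_centralizer_singleton_iff.mp hx) (mem_centralizer_singleton_iff.mp hy).symm).eq

end CommTransitive

theorem limit_group_unique_maximal_abelian_general (G : Type*) [Group G]
    (hfrf : FullyResiduallyFree G)
    (A : Subgroup G) (hA : A ≠ ⊥)
    (hAab : ∀ x ∈ A, ∀ y ∈ A, x * y = y * x) :
    ∃! M : Subgroup G,
      (∀ x ∈ M, ∀ y ∈ M, x * y = y * x) ∧ A ≤ M ∧
        ∀ N : Subgroup G, (∀ x ∈ N, ∀ y ∈ N, x * y = y * x) → M ≤ N → N = M := by
  obtain ⟨a, haA, ha⟩ := A.bot_or_exists_ne_one.resolve_left hA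
  have hM : ∀ x ∈ Subgroup.centralizer {a}, ∀ y ∈ Subgroup.centralizer {a}, x * y = y * x :=
    fun _ hx _ hy => hfrf.commTransitive.mul_comm_of_mem_centralizer ha hx hy
  have le_centralizer : ∀ N : Subgroup G, (∀ x ∈ N, ∀ y ∈ N, x * y = y * x) → a ∈ N →
      N ≤ Subgroup.centralizer {a} :=
    fun N hN haN _ hx => Subgroup.mem_centralizer_singleton_iff.mpr (hN _ hx a haN)
  have haM : a ∈ Subgroup.centralizer {a} := Subgroup.mem_centralizer_singleton_iff.mpr rfl
  refine ⟨Subgroup.centralizer {a}, ⟨hM, le_centralizer A hAab haA, fun N hN hMN => ?_⟩, ?_⟩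
  · exact le_antisymm (le_centralizer N hN (hMN haM)) hMN
  · rintro M ⟨hMab, hAM, hMmax⟩
    exact (hMmax _ hM (le_centralizer M hMab (hAM haA))).symm

/-- In a limit group, every nontrivial abelian subgroup is contained in a unique
maximal abelian subgroup. -/
theorem limit_group_unique_maximal_abelian (G : Type*) [Group G]
    (hfg : Group.FG G) (hfrf : FullyResiduallyFree G)
    (A : Subgroup G) (hA : A ≠ ⊥)
    (hAab : ∀ x ∈ A, ∀ y ∈ A, x * y = y * x) :
    ∃! M : Subgroup G,
      (∀ x ∈ M, ∀ y ∈ M, x * y = y * x) ∧ A ≤ M ∧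
        ∀ N : Subgroup G, (∀ x ∈ N, ∀ y ∈ N, x * y = y * x) → M ≤ N → N = M :=
  limit_group_unique_maximal_abelian_general G hfrf A hA hAab
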